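/- Let p ∈ ℝ[t], let x ∈ ℝⁿ with x > 0 entrywise, and suppose n ≥ 2. For every r ∈ {0,…,n−1}, the r mod n-part of p evaluated at K_x satisfies p_{(r,n)}(K_x) = [ p_{(r,n)}(α_x^{1/n}) / α_x^{r/n} ] · K_x^r. -/

import Mathlib

open Matrix
open scoped Fin.NatCast Fin.CommRing

/-!
`K_x = D_x C` and `C^n = 1`, so `K_x^n` is diagonal with `i`-th entry `∏_{j<n} x_{i+j}`: walking
once around the cycle collects every `x_k`, hence `K_x^n = α_x • 1`. Therefore each monomial
`a_k t^k` with `k ≡ r (mod n)` sends `K_x` to `a_k α_x^{⌊k/n⌋} K_x^r`. The scalar `s = α_x^{1/n}`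
satisfies `s^n = α_x` as well, so the same computation gives
`p_{(r,n)}(s) = (∑ a_k α_x^{⌊k/n⌋}) s^r` with `s^r = α_x^{r/n} ≠ 0`.
-/

/-- The `n`-by-`n` cyclic permutation matrix `C` with `(i,j)`-entry `δ_{π(i),j}`,
where `π(i) = (i mod n) + 1` (realized 0-based by `finRotate n : i ↦ i + 1`). -/
noncomputable def cycMat (n : ℕ) : Matrix (Fin n) (Fin n) ℝ :=
  (finRotate n).permMatrix ℝ

/-- `K_x := D_x C`. -/
noncomputable def Kmat {n : ℕ} (x : Fin n → ℝ) : Matrix (Fin n) (Fin n) ℝ :=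
  Matrix.diagonal x * cycMat n

/-- The `r mod n`-part of `p`: `p_{(r,n)}(t) := Σ_{k ≤ deg p, k mod n = r} a_k t^k`. -/
noncomputable def polyPart (p : Polynomial ℝ) (n r : ℕ) : Polynomial ℝ :=
  ∑ k ∈ Finset.range (p.natDegree + 1),
    if k % n = r then Polynomial.C (p.coeff k) * Polynomial.X ^ k else 0

theorem pow_eq_smul_pow_mod {R A : Type*} [CommSemiring R] [Semiring A] [Algebra R A]
    {a : A} {c : R} {n : ℕ} (h : a ^ n = algebraMap R A c) (k : ℕ) :
    a ^ k = c ^ (k / n) • a ^ (k % n) := by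
  conv_lhs => rw [← Nat.div_add_mod k n]
  rw [pow_add, pow_mul, h, ← map_pow, ← Algebra.smul_def]

theorem aeval_polyPart_of_pow_eq {A : Type*} [Semiring A] [Algebra ℝ A] (p : Polynomial ℝ)
    {n : ℕ} (r : ℕ) {a : A} {c : ℝ} (h : a ^ n = algebraMap ℝ A c) :
    Polynomial.aeval a (polyPart p n r) =
      (∑ k ∈ Finset.range (p.natDegree + 1),
        if k % n = r then p.coeff k * c ^ (k / n) else 0) • a ^ r := by
  rw [polyPart, map_sum, Finset.sum_smul]
  refine Finset.sum_congr rfl fun k _ => ?_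
  split_ifs with hk
  · rw [map_mul, map_pow, Polynomial.aeval_C, Polynomial.aeval_X, pow_eq_smul_pow_mod h, hk,
      ← Algebra.smul_def, smul_smul, mul_comm]
  · rw [map_zero, zero_smul]

section PermMatrix

variable {ι R : Type*} [Fintype ι] [DecidableEq ι] [CommSemiring R]

theorem permMatrix_mul_diagonal (σ : Equiv.Perm ι) (x : ι → R) :
    σ.permMatrix R * diagonal x = diagonal (x ∘ σ) * σ.permMatrix R := by
  ext i j
  by_cases h : σ i = j <;> simp [PEquiv.toMatrix_apply, h]

theorem diagonal_mul_permMatrix_pow (x : ι → R) (σ : Equiv.Perm ι) (m : ℕ) :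
    (diagonal x * σ.permMatrix R) ^ m =
      diagonal (fun i => ∏ j ∈ Finset.range m, x ((σ ^ j) i)) * (σ ^ m).permMatrix R := by
  induction m with
  | zero => simp
  | succ m ih =>
    rw [pow_succ, ih, Matrix.mul_assoc, ← Matrix.mul_assoc _ (diagonal x), permMatrix_mul_diagonal,
      Matrix.mul_assoc, ← permMatrix_mul, ← pow_succ', ← Matrix.mul_assoc, diagonal_mul_diagonal]
    simp only [Finset.prod_range_succ, Function.comp_apply]

end PermMatrix

theorem finRotate_pow_apply {n : ℕ} [NeZero n] (j : ℕ) (i : Fin n) :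
    (finRotate n ^ j) i = i + j := by
  induction j with
  | zero => simp
  | succ j ih => rw [pow_succ', Equiv.Perm.mul_apply, ih, finRotate_apply]; push_cast; ring

theorem finRotate_pow_self (n : ℕ) : finRotate n ^ n = 1 := by
  rcases n.eq_zero_or_pos with rfl | hn
  · rfl
  have := NeZero.of_pos hn
  ext i
  simp [finRotate_pow_apply]

theorem prod_range_add_eq_prod {n : ℕ} [NeZero n] {M : Type*} [CommMonoid M] (x : Fin n → M)
    (i : Fin n) : ∏ j ∈ Finset.range n, x (i + j) = ∏ k, x k := by
  rw [← Fin.prod_univ_eq_prod_range (fun j => x (i + j))]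
  simpa [Fin.cast_val_eq_self] using Equiv.prod_comp (Equiv.addLeft i) x

theorem Kmat_pow_self {n : ℕ} (x : Fin n → ℝ) :
    Kmat x ^ n = algebraMap ℝ (Matrix (Fin n) (Fin n) ℝ) (∏ k, x k) := by
  rcases n.eq_zero_or_pos with rfl | hn
  · exact Subsingleton.elim _ _
  have := NeZero.of_pos hn
  simp only [Kmat, cycMat, diagonal_mul_permMatrix_pow, finRotate_pow_self, permMatrix_one,
    Matrix.mul_one, algebraMap_eq_diagonal, finRotate_pow_apply, prod_range_add_eq_prod]
  rfl

theorem aeval_Kmat_polyPart_general (n : ℕ) (p : Polynomial ℝ)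
    (x : Fin n → ℝ) (hx : ∀ i, 0 < x i) (r : ℕ) :
    Polynomial.aeval (Kmat x) (polyPart p n r) =
      ((polyPart p n r).eval ((∏ k, x k) ^ ((1 : ℝ) / (n : ℝ))) /
          (∏ k, x k) ^ ((r : ℝ) / (n : ℝ))) • Kmat x ^ r := by
  obtain rfl | hn := eq_or_ne n 0
  · exact Subsingleton.elim _ _
  set α := ∏ k, x k
  have hα : 0 < α := Finset.prod_pos fun i _ => hx i
  have hroot : (α ^ ((1 : ℝ) / n)) ^ n = algebraMap ℝ ℝ α := by
    rw [one_div, Real.rpow_inv_natCast_pow hα.le hn, Algebra.algebraMap_self_apply]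
  have hpow : α ^ ((r : ℝ) / n) = (α ^ ((1 : ℝ) / n)) ^ r := by
    rw [← Real.rpow_mul_natCast hα.le, one_div_mul_eq_div]
  rw [aeval_polyPart_of_pow_eq p r (Kmat_pow_self x), ← Polynomial.coe_aeval_eq_eval,
    aeval_polyPart_of_pow_eq p r hroot, hpow, smul_eq_mul, mul_div_cancel_right₀ _ (by positivity)]

/-- Let `p ∈ ℝ[t]`, `x ∈ ℝⁿ` with `x > 0` entrywise, and `n ≥ 2`.
For every `r ∈ {0,…,n-1}`,
`p_{(r,n)}(K_x) = [ p_{(r,n)}(α_x^{1/n}) / α_x^{r/n} ] • K_x^r`,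
where `α_x = Π_k x_k` and `α_x^{1/n}` is the positive real `n`-th root. -/
theorem aeval_Kmat_polyPart (n : ℕ) (hn : 2 ≤ n) (p : Polynomial ℝ)
    (x : Fin n → ℝ) (hx : ∀ i, 0 < x i) (r : ℕ) (hr : r < n) :
    Polynomial.aeval (Kmat x) (polyPart p n r) =
      ((polyPart p n r).eval ((∏ k, x k) ^ ((1 : ℝ) / (n : ℝ))) /
          (∏ k, x k) ^ ((r : ℝ) / (n : ℝ))) • Kmat x ^ r :=
  aeval_Kmat_polyPart_general n p x hx r
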